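/- There exists a real constant δ with 0 < δ < 1 such that for every natural number h ≥ 1 and every natural number d with d ≥ 10h, writing g = 2h, the inequality C(d, h) · C(3h−1, h−1) ≤ δ · C(d+2h, 2h) holds (with all binomial coefficients cast to the reals). -/

import Mathlib

private lemma top_step (n k m : ℕ) (hm : n + 1 = k + m) :
    Nat.choose (n+1) k * m = (n+1) * Nat.choose n k := by
  have h1 := Nat.choose_mul_succ_eq n k
  have h2 : n + 1 - k = m := by omega
  rw [h2] at h1
  rw [← h1, Nat.mul_comm]

private lemma top_step' (a b k m : ℕ) (h1 : a = b + 1) (h2 : a = k + m) :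
    Nat.choose a k * m = a * Nat.choose b k := by
  subst h1; exact top_step b k m (by omega)

private lemma both_step' (a b l : ℕ) (h1 : a = b + 1) :
    Nat.choose a (l+1) * (l+1) = a * Nat.choose b l := by
  subst h1
  have h2 := Nat.add_one_mul_choose_eq b l
  exact h2.symm

private lemma key_ineq (h : ℕ) :
    2 * Nat.choose (3*h) h * Nat.choose (2*h) h ≤ 3 * Nat.choose (11*h) h := by
  induction h with
  | zero => decide
  | succ n ih =>
    rcases Nat.lt_or_ge n 9 with hn | hn
    · interval_cases n <;> decide
    · rw [show 3*(n+1) = 3*n+3 from by ring, show 2*(n+1) = 2*n+2 from by ring,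
        show 11*(n+1) = 11*n+11 from by ring]
      have a1 : Nat.choose (3*n+1) n * (2*n+1) = (3*n+1) * Nat.choose (3*n) n :=
        top_step' (3*n+1) (3*n) n (2*n+1) (by ring) (by ring)
      have a2 : Nat.choose (3*n+2) n * (2*n+2) = (3*n+2) * Nat.choose (3*n+1) n :=
        top_step' (3*n+2) (3*n+1) n (2*n+2) (by ring) (by ring)
      have a3 : Nat.choose (3*n+3) (n+1) * (n+1) = (3*n+3) * Nat.choose (3*n+2) n :=
        both_step' (3*n+3) (3*n+2) n (by ring)
      have idA : Nat.choose (3*n+3) (n+1) * ((n+1)*((2*n+1)*(2*n+2)))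
          = ((3*n+1)*((3*n+2)*(3*n+3))) * Nat.choose (3*n) n := by
        calc Nat.choose (3*n+3) (n+1) * ((n+1)*((2*n+1)*(2*n+2)))
            = (Nat.choose (3*n+3) (n+1) * (n+1)) * ((2*n+1)*(2*n+2)) := by ring
          _ = ((3*n+3) * Nat.choose (3*n+2) n) * ((2*n+1)*(2*n+2)) := by rw [a3]
          _ = (3*n+3) * ((Nat.choose (3*n+2) n * (2*n+2)) * (2*n+1)) := by ring
          _ = (3*n+3) * (((3*n+2) * Nat.choose (3*n+1) n) * (2*n+1)) := by rw [a2]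
          _ = (3*n+3) * ((3*n+2) * (Nat.choose (3*n+1) n * (2*n+1))) := by ring
          _ = (3*n+3) * ((3*n+2) * ((3*n+1) * Nat.choose (3*n) n)) := by rw [a1]
          _ = ((3*n+1)*((3*n+2)*(3*n+3))) * Nat.choose (3*n) n := by ring
      have b1 : Nat.choose (2*n+1) n * (n+1) = (2*n+1) * Nat.choose (2*n) n :=
        top_step' (2*n+1) (2*n) n (n+1) (by ring) (by ring)
      have b2 : Nat.choose (2*n+2) (n+1) * (n+1) = (2*n+2) * Nat.choose (2*n+1) n :=
        both_step' (2*n+2) (2*n+1) n (by ring)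
      have idB : Nat.choose (2*n+2) (n+1) * ((n+1)*(n+1))
          = ((2*n+1)*(2*n+2)) * Nat.choose (2*n) n := by
        calc Nat.choose (2*n+2) (n+1) * ((n+1)*(n+1))
            = (Nat.choose (2*n+2) (n+1) * (n+1)) * (n+1) := by ring
          _ = ((2*n+2) * Nat.choose (2*n+1) n) * (n+1) := by rw [b2]
          _ = (2*n+2) * (Nat.choose (2*n+1) n * (n+1)) := by ring
          _ = (2*n+2) * ((2*n+1) * Nat.choose (2*n) n) := by rw [b1]
          _ = ((2*n+1)*(2*n+2)) * Nat.choose (2*n) n := by ring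
      have d1 : Nat.choose (11*n+1) n * (10*n+1) = (11*n+1) * Nat.choose (11*n) n :=
        top_step' (11*n+1) (11*n) n (10*n+1) (by ring) (by ring)
      have d2 : Nat.choose (11*n+2) n * (10*n+2) = (11*n+2) * Nat.choose (11*n+1) n :=
        top_step' (11*n+2) (11*n+1) n (10*n+2) (by ring) (by ring)
      have d3 : Nat.choose (11*n+3) n * (10*n+3) = (11*n+3) * Nat.choose (11*n+2) n :=
        top_step' (11*n+3) (11*n+2) n (10*n+3) (by ring) (by ring)
      have d4 : Nat.choose (11*n+4) n * (10*n+4) = (11*n+4) * Nat.choose (11*n+3) n :=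
        top_step' (11*n+4) (11*n+3) n (10*n+4) (by ring) (by ring)
      have d5 : Nat.choose (11*n+5) n * (10*n+5) = (11*n+5) * Nat.choose (11*n+4) n :=
        top_step' (11*n+5) (11*n+4) n (10*n+5) (by ring) (by ring)
      have d6 : Nat.choose (11*n+6) n * (10*n+6) = (11*n+6) * Nat.choose (11*n+5) n :=
        top_step' (11*n+6) (11*n+5) n (10*n+6) (by ring) (by ring)
      have d7 : Nat.choose (11*n+7) n * (10*n+7) = (11*n+7) * Nat.choose (11*n+6) n :=
        top_step' (11*n+7) (11*n+6) n (10*n+7) (by ring) (by ring)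
      have d8 : Nat.choose (11*n+8) n * (10*n+8) = (11*n+8) * Nat.choose (11*n+7) n :=
        top_step' (11*n+8) (11*n+7) n (10*n+8) (by ring) (by ring)
      have d9 : Nat.choose (11*n+9) n * (10*n+9) = (11*n+9) * Nat.choose (11*n+8) n :=
        top_step' (11*n+9) (11*n+8) n (10*n+9) (by ring) (by ring)
      have d10 : Nat.choose (11*n+10) n * (10*n+10) = (11*n+10) * Nat.choose (11*n+9) n :=
        top_step' (11*n+10) (11*n+9) n (10*n+10) (by ring) (by ring)
      have d11 : Nat.choose (11*n+11) (n+1) * (n+1) = (11*n+11) * Nat.choose (11*n+10) n :=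
        both_step' (11*n+11) (11*n+10) n (by ring)
      have idD : Nat.choose (11*n+11) (n+1) * ((n+1) * ((10*n+1)*(10*n+2)*(10*n+3)*(10*n+4)*(10*n+5)*(10*n+6)*(10*n+7)*(10*n+8)*(10*n+9)*(10*n+10))) = ((11*n+1)*(11*n+2)*(11*n+3)*(11*n+4)*(11*n+5)*(11*n+6)*(11*n+7)*(11*n+8)*(11*n+9)*(11*n+10)*(11*n+11)) * Nat.choose (11*n) n := by
        calc Nat.choose (11*n+11) (n+1) * ((n+1) * ((10*n+1)*(10*n+2)*(10*n+3)*(10*n+4)*(10*n+5)*(10*n+6)*(10*n+7)*(10*n+8)*(10*n+9)*(10*n+10)))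
            = (Nat.choose (11*n+11) (n+1) * (n+1)) * ((10*n+1)*(10*n+2)*(10*n+3)*(10*n+4)*(10*n+5)*(10*n+6)*(10*n+7)*(10*n+8)*(10*n+9)*(10*n+10)) := by ring
          _ = ((11*n+11) * Nat.choose (11*n+10) n) * ((10*n+1)*(10*n+2)*(10*n+3)*(10*n+4)*(10*n+5)*(10*n+6)*(10*n+7)*(10*n+8)*(10*n+9)*(10*n+10)) := by rw [d11]
          _ = ((11*n+11)) * (Nat.choose (11*n+10) n * (10*n+10)) * ((10*n+1)*(10*n+2)*(10*n+3)*(10*n+4)*(10*n+5)*(10*n+6)*(10*n+7)*(10*n+8)*(10*n+9)) := by ring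
          _ = ((11*n+11)) * ((11*n+10) * Nat.choose (11*n+9) n) * ((10*n+1)*(10*n+2)*(10*n+3)*(10*n+4)*(10*n+5)*(10*n+6)*(10*n+7)*(10*n+8)*(10*n+9)) := by rw [d10]
          _ = ((11*n+11)*(11*n+10)) * (Nat.choose (11*n+9) n * (10*n+9)) * ((10*n+1)*(10*n+2)*(10*n+3)*(10*n+4)*(10*n+5)*(10*n+6)*(10*n+7)*(10*n+8)) := by ring
          _ = ((11*n+11)*(11*n+10)) * ((11*n+9) * Nat.choose (11*n+8) n) * ((10*n+1)*(10*n+2)*(10*n+3)*(10*n+4)*(10*n+5)*(10*n+6)*(10*n+7)*(10*n+8)) := by rw [d9]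
          _ = ((11*n+11)*(11*n+10)*(11*n+9)) * (Nat.choose (11*n+8) n * (10*n+8)) * ((10*n+1)*(10*n+2)*(10*n+3)*(10*n+4)*(10*n+5)*(10*n+6)*(10*n+7)) := by ring
          _ = ((11*n+11)*(11*n+10)*(11*n+9)) * ((11*n+8) * Nat.choose (11*n+7) n) * ((10*n+1)*(10*n+2)*(10*n+3)*(10*n+4)*(10*n+5)*(10*n+6)*(10*n+7)) := by rw [d8]
          _ = ((11*n+11)*(11*n+10)*(11*n+9)*(11*n+8)) * (Nat.choose (11*n+7) n * (10*n+7)) * ((10*n+1)*(10*n+2)*(10*n+3)*(10*n+4)*(10*n+5)*(10*n+6)) := by ring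
          _ = ((11*n+11)*(11*n+10)*(11*n+9)*(11*n+8)) * ((11*n+7) * Nat.choose (11*n+6) n) * ((10*n+1)*(10*n+2)*(10*n+3)*(10*n+4)*(10*n+5)*(10*n+6)) := by rw [d7]
          _ = ((11*n+11)*(11*n+10)*(11*n+9)*(11*n+8)*(11*n+7)) * (Nat.choose (11*n+6) n * (10*n+6)) * ((10*n+1)*(10*n+2)*(10*n+3)*(10*n+4)*(10*n+5)) := by ring
          _ = ((11*n+11)*(11*n+10)*(11*n+9)*(11*n+8)*(11*n+7)) * ((11*n+6) * Nat.choose (11*n+5) n) * ((10*n+1)*(10*n+2)*(10*n+3)*(10*n+4)*(10*n+5)) := by rw [d6]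
          _ = ((11*n+11)*(11*n+10)*(11*n+9)*(11*n+8)*(11*n+7)*(11*n+6)) * (Nat.choose (11*n+5) n * (10*n+5)) * ((10*n+1)*(10*n+2)*(10*n+3)*(10*n+4)) := by ring
          _ = ((11*n+11)*(11*n+10)*(11*n+9)*(11*n+8)*(11*n+7)*(11*n+6)) * ((11*n+5) * Nat.choose (11*n+4) n) * ((10*n+1)*(10*n+2)*(10*n+3)*(10*n+4)) := by rw [d5]
          _ = ((11*n+11)*(11*n+10)*(11*n+9)*(11*n+8)*(11*n+7)*(11*n+6)*(11*n+5)) * (Nat.choose (11*n+4) n * (10*n+4)) * ((10*n+1)*(10*n+2)*(10*n+3)) := by ring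
          _ = ((11*n+11)*(11*n+10)*(11*n+9)*(11*n+8)*(11*n+7)*(11*n+6)*(11*n+5)) * ((11*n+4) * Nat.choose (11*n+3) n) * ((10*n+1)*(10*n+2)*(10*n+3)) := by rw [d4]
          _ = ((11*n+11)*(11*n+10)*(11*n+9)*(11*n+8)*(11*n+7)*(11*n+6)*(11*n+5)*(11*n+4)) * (Nat.choose (11*n+3) n * (10*n+3)) * ((10*n+1)*(10*n+2)) := by ring
          _ = ((11*n+11)*(11*n+10)*(11*n+9)*(11*n+8)*(11*n+7)*(11*n+6)*(11*n+5)*(11*n+4)) * ((11*n+3) * Nat.choose (11*n+2) n) * ((10*n+1)*(10*n+2)) := by rw [d3]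
          _ = ((11*n+11)*(11*n+10)*(11*n+9)*(11*n+8)*(11*n+7)*(11*n+6)*(11*n+5)*(11*n+4)*(11*n+3)) * (Nat.choose (11*n+2) n * (10*n+2)) * ((10*n+1)) := by ring
          _ = ((11*n+11)*(11*n+10)*(11*n+9)*(11*n+8)*(11*n+7)*(11*n+6)*(11*n+5)*(11*n+4)*(11*n+3)) * ((11*n+2) * Nat.choose (11*n+1) n) * ((10*n+1)) := by rw [d2]
          _ = ((11*n+11)*(11*n+10)*(11*n+9)*(11*n+8)*(11*n+7)*(11*n+6)*(11*n+5)*(11*n+4)*(11*n+3)*(11*n+2)) * (Nat.choose (11*n+1) n * (10*n+1)) := by ring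
          _ = ((11*n+11)*(11*n+10)*(11*n+9)*(11*n+8)*(11*n+7)*(11*n+6)*(11*n+5)*(11*n+4)*(11*n+3)*(11*n+2)) * ((11*n+1) * Nat.choose (11*n) n) := by rw [d1]
          _ = ((11*n+1)*(11*n+2)*(11*n+3)*(11*n+4)*(11*n+5)*(11*n+6)*(11*n+7)*(11*n+8)*(11*n+9)*(11*n+10)*(11*n+11)) * Nat.choose (11*n) n := by ring
      have pAB : ((3*n+1)*((3*n+2)*(3*n+3))) * ((2*n+1)*(2*n+2))
          ≤ 27 * (((n+1)*((2*n+1)*(2*n+2))) * ((n+1)*(n+1))) :=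
        Nat.le.intro (k := (2*n+1)*(2*n+2)*(27*n^2+48*n+21)) (by ring)
      have pD : 27 * ((n+1) * ((10*n+1)*(10*n+2)*(10*n+3)*(10*n+4)*(10*n+5)*(10*n+6)*(10*n+7)*(10*n+8)*(10*n+9)*(10*n+10))) ≤ (11*n+1)*(11*n+2)*(11*n+3)*(11*n+4)*(11*n+5)*(11*n+6)*(11*n+7)*(11*n+8)*(11*n+9)*(11*n+10)*(11*n+11) := by
        obtain ⟨m, rfl⟩ : ∃ m, n = m + 9 := ⟨n - 9, by omega⟩
        exact Nat.le.intro (k := 57988620117267840000 + 157771110307135996800*m + 130232693418696195840*m^2 + 55867841082320054456*m^3 + 14830392885335704500*m^4 + 2632546635851106430*m^5 + 323605124080514955*m^6 + 27784315160550183*m^7 + 1641788134068150*m^8 + 63821844007120*m^9 + 1472725414155*m^10 + 15311670611*m^11) (by ring)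
      refine Nat.le_of_mul_le_mul_right ?_
        (c := ((n+1)*((2*n+1)*(2*n+2))) * ((n+1)*(n+1)) * ((n+1) * ((10*n+1)*(10*n+2)*(10*n+3)*(10*n+4)*(10*n+5)*(10*n+6)*(10*n+7)*(10*n+8)*(10*n+9)*(10*n+10))))
        (by positivity)
      calc 2 * Nat.choose (3*n+3) (n+1) * Nat.choose (2*n+2) (n+1) *
            (((n+1)*((2*n+1)*(2*n+2))) * ((n+1)*(n+1)) * ((n+1) * ((10*n+1)*(10*n+2)*(10*n+3)*(10*n+4)*(10*n+5)*(10*n+6)*(10*n+7)*(10*n+8)*(10*n+9)*(10*n+10))))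
          = 2 * (Nat.choose (3*n+3) (n+1) * ((n+1)*((2*n+1)*(2*n+2)))) *
            (Nat.choose (2*n+2) (n+1) * ((n+1)*(n+1))) * ((n+1) * ((10*n+1)*(10*n+2)*(10*n+3)*(10*n+4)*(10*n+5)*(10*n+6)*(10*n+7)*(10*n+8)*(10*n+9)*(10*n+10))) := by ring
        _ = 2 * (((3*n+1)*((3*n+2)*(3*n+3))) * Nat.choose (3*n) n) *
            (((2*n+1)*(2*n+2)) * Nat.choose (2*n) n) * ((n+1) * ((10*n+1)*(10*n+2)*(10*n+3)*(10*n+4)*(10*n+5)*(10*n+6)*(10*n+7)*(10*n+8)*(10*n+9)*(10*n+10))) := by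
              rw [idA, idB]
        _ = (2 * Nat.choose (3*n) n * Nat.choose (2*n) n) *
            ((((3*n+1)*((3*n+2)*(3*n+3))) * ((2*n+1)*(2*n+2))) * ((n+1) * ((10*n+1)*(10*n+2)*(10*n+3)*(10*n+4)*(10*n+5)*(10*n+6)*(10*n+7)*(10*n+8)*(10*n+9)*(10*n+10)))) := by
              ring
        _ ≤ (3 * Nat.choose (11*n) n) *
            ((((3*n+1)*((3*n+2)*(3*n+3))) * ((2*n+1)*(2*n+2))) * ((n+1) * ((10*n+1)*(10*n+2)*(10*n+3)*(10*n+4)*(10*n+5)*(10*n+6)*(10*n+7)*(10*n+8)*(10*n+9)*(10*n+10)))) :=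
              Nat.mul_le_mul_right _ ih
        _ ≤ (3 * Nat.choose (11*n) n) *
            ((27 * (((n+1)*((2*n+1)*(2*n+2))) * ((n+1)*(n+1)))) * ((n+1) * ((10*n+1)*(10*n+2)*(10*n+3)*(10*n+4)*(10*n+5)*(10*n+6)*(10*n+7)*(10*n+8)*(10*n+9)*(10*n+10)))) :=
              Nat.mul_le_mul_left _ (Nat.mul_le_mul_right _ pAB)
        _ = (3 * Nat.choose (11*n) n) * ((((n+1)*((2*n+1)*(2*n+2))) * ((n+1)*(n+1)))) *
            (27 * ((n+1) * ((10*n+1)*(10*n+2)*(10*n+3)*(10*n+4)*(10*n+5)*(10*n+6)*(10*n+7)*(10*n+8)*(10*n+9)*(10*n+10)))) := by ring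
        _ ≤ (3 * Nat.choose (11*n) n) * ((((n+1)*((2*n+1)*(2*n+2))) * ((n+1)*(n+1)))) *
            ((11*n+1)*(11*n+2)*(11*n+3)*(11*n+4)*(11*n+5)*(11*n+6)*(11*n+7)*(11*n+8)*(11*n+9)*(11*n+10)*(11*n+11)) := Nat.mul_le_mul_left _ pD
        _ = 3 * (((11*n+1)*(11*n+2)*(11*n+3)*(11*n+4)*(11*n+5)*(11*n+6)*(11*n+7)*(11*n+8)*(11*n+9)*(11*n+10)*(11*n+11)) * Nat.choose (11*n) n) *
            (((n+1)*((2*n+1)*(2*n+2))) * ((n+1)*(n+1))) := by ring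
        _ = 3 * (Nat.choose (11*n+11) (n+1) * ((n+1) * ((10*n+1)*(10*n+2)*(10*n+3)*(10*n+4)*(10*n+5)*(10*n+6)*(10*n+7)*(10*n+8)*(10*n+9)*(10*n+10)))) *
            (((n+1)*((2*n+1)*(2*n+2))) * ((n+1)*(n+1))) := by rw [idD]
        _ = 3 * Nat.choose (11*n+11) (n+1) *
            (((n+1)*((2*n+1)*(2*n+2))) * ((n+1)*(n+1)) * ((n+1) * ((10*n+1)*(10*n+2)*(10*n+3)*(10*n+4)*(10*n+5)*(10*n+6)*(10*n+7)*(10*n+8)*(10*n+9)*(10*n+10)))) := by ring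

private lemma main_nat (h d : ℕ) (hh : 1 ≤ h) (hd : 10*h ≤ d) :
    2 * (Nat.choose d h * Nat.choose (3*h-1) (h-1)) ≤ Nat.choose (d+2*h) (2*h) := by
  have k1 := key_ineq h
  have mono1 : Nat.choose (11*h) h ≤ Nat.choose (d+h) h := Nat.choose_le_choose h (by omega)
  have mono2 : Nat.choose d h ≤ Nat.choose (d+2*h) h := Nat.choose_le_choose h (by omega)
  have id2 : Nat.choose (d+2*h) (2*h) * Nat.choose (2*h) h
      = Nat.choose (d+2*h) h * Nat.choose (d+h) h := by
    have h3 := Nat.choose_mul (n := d+2*h) (k := 2*h) (show h ≤ 2*h from by omega)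
    rw [show d+2*h-h = d+h from by omega, show 2*h-h = h from by omega] at h3
    exact h3
  have tri : 3 * h * Nat.choose (3*h-1) (h-1) = Nat.choose (3*h) h * h := by
    have h4 := Nat.add_one_mul_choose_eq (3*h-1) (h-1)
    rw [show 3*h-1+1 = 3*h from by omega, show h-1+1 = h from by omega] at h4
    exact h4
  have step2 : Nat.choose d h * (2 * Nat.choose (3*h) h * Nat.choose (2*h) h)
      ≤ Nat.choose (d+2*h) h * (3 * Nat.choose (d+h) h) :=
    Nat.mul_le_mul mono2 (le_trans k1 (Nat.mul_le_mul_left _ mono1))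
  have step3 : (2 * (Nat.choose d h * Nat.choose (3*h) h)) * Nat.choose (2*h) h
      ≤ (3 * Nat.choose (d+2*h) (2*h)) * Nat.choose (2*h) h := by
    calc (2 * (Nat.choose d h * Nat.choose (3*h) h)) * Nat.choose (2*h) h
        = Nat.choose d h * (2 * Nat.choose (3*h) h * Nat.choose (2*h) h) := by ring
      _ ≤ Nat.choose (d+2*h) h * (3 * Nat.choose (d+h) h) := step2
      _ = 3 * (Nat.choose (d+2*h) h * Nat.choose (d+h) h) := by ring
      _ = 3 * (Nat.choose (d+2*h) (2*h) * Nat.choose (2*h) h) := by rw [id2]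
      _ = (3 * Nat.choose (d+2*h) (2*h)) * Nat.choose (2*h) h := by ring
  have step4 : 2 * (Nat.choose d h * Nat.choose (3*h) h) ≤ 3 * Nat.choose (d+2*h) (2*h) :=
    Nat.le_of_mul_le_mul_right step3 (Nat.choose_pos (by omega))
  have step5 : (3*h) * (2 * (Nat.choose d h * Nat.choose (3*h-1) (h-1)))
      ≤ (3*h) * Nat.choose (d+2*h) (2*h) := by
    calc (3*h) * (2 * (Nat.choose d h * Nat.choose (3*h-1) (h-1)))
        = 2 * Nat.choose d h * (3 * h * Nat.choose (3*h-1) (h-1)) := by ring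
      _ = 2 * Nat.choose d h * (Nat.choose (3*h) h * h) := by rw [tri]
      _ = (2 * (Nat.choose d h * Nat.choose (3*h) h)) * h := by ring
      _ ≤ (3 * Nat.choose (d+2*h) (2*h)) * h := Nat.mul_le_mul_right _ step4
      _ = (3*h) * Nat.choose (d+2*h) (2*h) := by ring
  exact Nat.le_of_mul_le_mul_left step5 (by omega)

theorem halfcover_constant_strong :
    ∃ δ : ℝ, 0 < δ ∧ δ < 1 ∧
      ∀ h d : ℕ, 1 ≤ h → 10 * h ≤ d →
        (Nat.choose d h : ℝ) * (Nat.choose (3 * h - 1) (h - 1) : ℝ) ≤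
          δ * (Nat.choose (d + 2 * h) (2 * h) : ℝ) := by
  refine ⟨1/2, by norm_num, by norm_num, ?_⟩
  intro h d hh hd
  have H := main_nat h d hh hd
  have H' : ((2 * (Nat.choose d h * Nat.choose (3*h-1) (h-1)) : ℕ) : ℝ)
      ≤ ((Nat.choose (d+2*h) (2*h) : ℕ) : ℝ) := Nat.cast_le.mpr H
  push_cast at H'
  linarith
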